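/- In the free noncommutative algebra C⟨a,b⟩ modulo the two-sided ideal generated by ab+ba and -a² + b³ + aba, the element b⁶ equals 0. -/
import Mathlib


open FreeAlgebra

/-- The relations defining the contraction algebra Γ = C⟨a,b⟩/(ab+ba, -a²+b³+aba),
with a = ι ℂ 0 and b = ι ℂ 1. -/
inductive GamRel : FreeAlgebra ℂ (Fin 2) → FreeAlgebra ℂ (Fin 2) → Prop
  | r1 : GamRel (ι ℂ 0 * ι ℂ 1 + ι ℂ 1 * ι ℂ 0) 0
  | r2 : GamRel (-(ι ℂ 0) ^ 2 + (ι ℂ 1) ^ 3 + ι ℂ 0 * ι ℂ 1 * ι ℂ 0) 0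

/-- In any ℂ-algebra with elements `a`, `b` satisfying `ab + ba = 0` and
`-a² + b³ + aba = 0`, we have `b⁶ = 0`. -/
theorem gam_aux {R : Type*} [Ring R] [Algebra ℂ R] (a b : R)
    (h1 : a * b + b * a = 0) (h2 : -a ^ 2 + b ^ 3 + a * b * a = 0) :
    b ^ 6 = 0 := by
  -- 2a³ = 0
  have ha3two : a * a * a + a * a * a = 0 := by
    have key : a * a * a + a * a * a =
        a * (a * b + b * a) * a + (a * b + b * a) * b ^ 2
          - b * (a * b + b * a) * b + b ^ 2 * (a * b + b * a)
          - a * (-a ^ 2 + b ^ 3 + a * b * a)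
          - (-a ^ 2 + b ^ 3 + a * b * a) * a := by
      noncomm_ring
    rw [key, h1, h2]
    simp
  have ha3 : a * a * a = 0 := by
    have h2' : (2 : ℂ) • (a * a * a) = 0 := by
      rw [two_smul]; exact ha3two
    have heq : a * a * a = (2⁻¹ : ℂ) • ((2 : ℂ) • (a * a * a)) := by
      rw [smul_smul]; norm_num
    rw [heq, h2', smul_zero]
  -- b³a = 0
  have hb3a : b ^ 3 * a = 0 := by
    have key : b ^ 3 * a =
        (-a ^ 2 + b ^ 3 + a * b * a) * a + a * a * a + b * (a * a * a)
          - (a * b + b * a) * (a * a) := by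
      noncomm_ring
    rw [key, h1, h2, ha3]
    simp
  -- b⁶ = 0
  have key : b ^ 6 =
      b ^ 3 * (-a ^ 2 + b ^ 3 + a * b * a) - b ^ 3 * ((a * b + b * a) * a)
        + b ^ 3 * a * a + b * (b ^ 3 * a * a) := by
    noncomm_ring
  rw [key, h1, h2, hb3a]
  simp

theorem stmt1 :
    (RingQuot.mkAlgHom ℂ GamRel (ι ℂ 1)) ^ 6 = 0 := by
  refine gam_aux (RingQuot.mkAlgHom ℂ GamRel (ι ℂ 0)) _ ?_ ?_
  · have h := RingQuot.mkAlgHom_rel ℂ GamRel.r1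
    rw [map_zero] at h
    rw [← h]
    simp only [map_add, map_mul]
  · have h := RingQuot.mkAlgHom_rel ℂ GamRel.r2
    rw [map_zero] at h
    rw [← h]
    simp only [map_add, map_mul, map_neg, map_pow]
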